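/- For a probability space (V, E, a), the composite π_ℂ ∘ E ∘ exp(A) restricted to V^⊗n sends X_1⊗⋯⊗X_n to E(X_1X_2⋯X_n), where E: T V → Tℂ is the coalgebra lift of E and A the coderivation lift of a. -/

import Mathlib

open scoped TensorProduct DirectSum

noncomputable section

/-- `n`-th tensor power of `V` over `ℂ`. -/
abbrev Tpow (V : Type) [AddCommGroup V] [Module ℂ V] (n : ℕ) : Type :=
  ⨂[ℂ] _ : Fin n, V

/-- The underlying space `⊕_{n ≥ 1} V^{⊗n}` of the reduced tensor coalgebra
(the summand of index `n` is `V^{⊗(n+1)}`). -/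
abbrev TCo (V : Type) [AddCommGroup V] [Module ℂ V] : Type :=
  ⨁ n : ℕ, Tpow V (n + 1)

variable {V W : Type} [AddCommGroup V] [Module ℂ V] [AddCommGroup W] [Module ℂ W]

/-- Cast between tensor powers of equal exponents. -/
def castT {m n : ℕ} (h : m = n) : Tpow V m ≃ₗ[ℂ] Tpow V n :=
  PiTensorProduct.reindex ℂ (fun _ => V) (finCongr h)

/-- Splitting `V^{⊗(i+1)+(j+1)} ≅ V^{⊗(i+1)} ⊗ V^{⊗(j+1)}`. -/
def splitT (i j : ℕ) :
    Tpow V ((i + 1) + (j + 1)) ≃ₗ[ℂ] Tpow V (i + 1) ⊗[ℂ] Tpow V (j + 1) :=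
  (PiTensorProduct.reindex ℂ (fun _ => V) finSumFinEquiv.symm).trans
    (PiTensorProduct.tmulEquiv ℂ V).symm

/-- Inclusion of the `n`-indexed summand `V^{⊗(n+1)} → T V`. -/
def inclT (V : Type) [AddCommGroup V] [Module ℂ V] (n : ℕ) :
    Tpow V (n + 1) →ₗ[ℂ] TCo V :=
  DirectSum.lof ℂ ℕ (fun m => Tpow V (m + 1)) n

/-- The deconcatenation coproduct on the reduced tensor coalgebra. -/
def Δ (V : Type) [AddCommGroup V] [Module ℂ V] : TCo V →ₗ[ℂ] TCo V ⊗[ℂ] TCo V :=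
  DirectSum.toModule ℂ ℕ (TCo V ⊗[ℂ] TCo V) fun n =>
    ∑ i : Fin n,
      (TensorProduct.map (inclT V i) (inclT V (n - 1 - i))).comp
        ((splitT (i : ℕ) (n - 1 - i)).toLinearMap.comp
          (castT (show n + 1 = ((i : ℕ) + 1) + ((n - 1 - (i : ℕ)) + 1) by
            have := i.isLt; omega)).toLinearMap)

/-- The projection `π₁ : T V → V` onto the first tensor component. -/
def pr (V : Type) [AddCommGroup V] [Module ℂ V] : TCo V →ₗ[ℂ] V :=
  DirectSum.toModule ℂ ℕ V fun n =>
    match n with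
    | 0 => (PiTensorProduct.subsingletonEquiv (0 : Fin 1)).toLinearMap
    | _ + 1 => 0

/-- The inclusion `V → T V` as the first tensor component. -/
def inclV (V : Type) [AddCommGroup V] [Module ℂ V] : V →ₗ[ℂ] TCo V :=
  (inclT V 0).comp (PiTensorProduct.subsingletonEquiv (0 : Fin 1) : Tpow V 1 ≃ₗ[ℂ] V).symm.toLinearMap

/-- A linear map `T V → T W` is a coalgebra morphism when it commutes with
the deconcatenation coproducts. -/
def IsCoalgMap (F : TCo V →ₗ[ℂ] TCo W) : Prop :=
  (Δ W).comp F = (TensorProduct.map F F).comp (Δ V)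

/-- A linear map `T V → T V` is a coderivation when it satisfies the co-Leibniz rule
`Δ ∘ B = (B ⊗ id + id ⊗ B) ∘ Δ`. -/
def IsCoder (B : TCo V →ₗ[ℂ] TCo V) : Prop :=
  (Δ V).comp B =
    (TensorProduct.map B LinearMap.id + TensorProduct.map LinearMap.id B).comp (Δ V)

/-- `F : T V → T W` is the coalgebra lift of the linear map `f : V → W`:
it is a coalgebra morphism whose projection to `W` is `f` on `V` and `0` on `V^{⊗n}`, `n ≥ 2`. -/
def IsCoalgLift (f : V →ₗ[ℂ] W) (F : TCo V →ₗ[ℂ] TCo W) : Prop :=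
  IsCoalgMap F ∧ (pr W).comp (F.comp (inclV V)) = f ∧
    ∀ n : ℕ, n ≠ 0 → (pr W).comp (F.comp (inclT V n)) = 0

/-- `A : T V → T V` is the coderivation lift of the bilinear map `a : V ⊗ V → V`:
it is a coderivation whose projection to `V` is `a` on `V^{⊗2}` and `0` on the
other tensor powers. -/
def IsCoderLift (a : V →ₗ[ℂ] V →ₗ[ℂ] V) (A : TCo V →ₗ[ℂ] TCo V) : Prop :=
  IsCoder A ∧
    (∀ X : Fin 2 → V,
      pr V (A (inclT V 1 (PiTensorProduct.tprod ℂ X))) = a (X 0) (X 1)) ∧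
    ∀ n : ℕ, n ≠ 1 → (pr V).comp (A.comp (inclT V n)) = 0

/-- The exponential `exp(A) = Σ_k A^k / k!` of a tensor-degree-lowering map `A` on `T V`
(on the summand `V^{⊗(n+1)}` the series truncates at `k = n`). -/
def expT (A : TCo V →ₗ[ℂ] TCo V) : TCo V →ₗ[ℂ] TCo V :=
  DirectSum.toModule ℂ ℕ (TCo V) fun n =>
    (∑ k ∈ Finset.range (n + 1), ((k.factorial : ℂ)⁻¹) • (A ^ k)).comp (inclT V n)

/-- Left-associated product of a nonempty list (junk value `0` on the empty list). -/
def listProd (mul : V →ₗ[ℂ] V →ₗ[ℂ] V) : List V → V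
  | [] => 0
  | x :: xs => xs.foldl (fun u v => mul u v) x

/-- The `n`-fold product `X 0 · X 1 ⋯ X (n-1)`. -/
def prodF (mul : V →ₗ[ℂ] V →ₗ[ℂ] V) {n : ℕ} (X : Fin n → V) : V :=
  listProd mul (List.ofFn X)

/-!
Both lifts are determined by their projections: `π ∘ Ê = E ∘ π` and `π ∘ A = a ∘ (π ⊗ π) ∘ Δ`.
Iterating the co-Leibniz rule gives `Δ ∘ Aᵏ = ∑ᵢ (k choose i) (Aⁱ ⊗ Aᵏ⁻ⁱ) ∘ Δ`, so by strong
induction on the tensor degree, `π (Aᵏ (X₀ ⊗ ⋯ ⊗ Xₙ))` vanishes unless `k = n`, and then equals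
`n! • X₀ ⋯ Xₙ`: each of the `n` deconcatenations `(X₀ ⋯ Xₛ) ⊗ (Xₛ₊₁ ⋯ Xₙ)` contributes
`(n-1 choose s) s! (n-1-s)! = (n-1)!` times the product, by associativity of `a`.
So only the `k = n` term of `exp A` survives under `π`, with coefficient `(n!)⁻¹ n! = 1`.
-/

open TensorProduct LinearMap in
theorem LinearMap.comp_pow_eq_sum_choose_map {R M N P : Type*} [CommSemiring R]
    [AddCommMonoid M] [Module R M] [AddCommMonoid N] [Module R N] [AddCommMonoid P] [Module R P]
    (f : M →ₗ[R] N ⊗[R] P) (B : Module.End R M) (C : Module.End R N) (D : Module.End R P)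
    (h : f ∘ₗ B = (C.rTensor P + D.lTensor N) ∘ₗ f) (k : ℕ) :
    f ∘ₗ (B ^ k) = ∑ i ∈ Finset.range (k + 1), k.choose i • map (C ^ i) (D ^ (k - i)) ∘ₗ f := by
  have hpow : f ∘ₗ (B ^ k) = ((C.rTensor P + D.lTensor N) ^ k) ∘ₗ f := by
    induction k with
    | zero => rfl
    | succ k ih =>
      rw [pow_succ, Module.End.mul_eq_comp, ← comp_assoc, ih, comp_assoc, h, ← comp_assoc,
        pow_succ, Module.End.mul_eq_comp]
  have hcomm : Commute (C.rTensor P) (D.lTensor N) := by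
    rw [commute_iff_eq, Module.End.mul_eq_comp, Module.End.mul_eq_comp, rTensor_comp_lTensor,
      lTensor_comp_rTensor]
  rw [hpow, hcomm.add_pow]
  refine (map_sum (lcomp R _ f) _ _).trans (Finset.sum_congr rfl fun i _ => ?_)
  rw [lcomp_apply', rTensor_pow, lTensor_pow, ← Nat.cast_comm, ← nsmul_eq_mul,
    Module.End.mul_eq_comp, rTensor_comp_lTensor, smul_comp]

theorem LinearMap.map_ite_zero₂ {R M N P : Type*} [CommSemiring R] [AddCommMonoid M] [Module R M]
    [AddCommMonoid N] [Module R N] [AddCommMonoid P] [Module R P] (f : M →ₗ[R] N →ₗ[R] P)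
    (p q : Prop) [Decidable p] [Decidable q] (x : M) (y : N) :
    f (if p then x else 0) (if q then y else 0) = if p ∧ q then f x y else 0 := by
  split_ifs <;> simp_all

open Nat in
theorem sum_choose_smul_deconcat {M : Type*} [AddCommMonoid M] (P : M) (m n : ℕ) :
    ∑ i ∈ Finset.range (m + 1), m.choose i • ∑ s : Fin n,
      (if i = s ∧ m - i = n - 1 - s then (n - 1 - s)! • (s : ℕ)! • P else 0) =
      if m + 1 = n then n ! • P else 0 := by
  simp only [Finset.smul_sum]
  split_ifs with hmn
  · subst hmn
    have hterm (s : Fin (m + 1)) : ∑ i ∈ Finset.range (m + 1), m.choose i •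
        (if i = s ∧ m - i = m + 1 - 1 - s then (m + 1 - 1 - s)! • (s : ℕ)! • P else 0) =
        m ! • P := by
      rw [Finset.sum_eq_single_of_mem (s : ℕ) (Finset.mem_range.2 s.isLt)
        fun i _ hi => by rw [if_neg fun h => hi h.1, smul_zero], if_pos ⟨rfl, rfl⟩, smul_smul,
        smul_smul, Nat.add_sub_cancel, mul_right_comm,
        Nat.choose_mul_factorial_mul_factorial (Nat.lt_succ_iff.1 s.isLt)]
    rw [Finset.sum_comm, Fintype.sum_congr _ _ hterm, Finset.sum_const, Finset.card_univ,
      Fintype.card_fin, smul_smul, Nat.factorial_succ]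
  · refine Finset.sum_eq_zero fun i hi => Finset.sum_eq_zero fun s _ => ?_
    rw [if_neg, smul_zero]
    have := s.isLt
    have := Finset.mem_range.1 hi
    omega

section Product

variable (a : V →ₗ[ℂ] V →ₗ[ℂ] V)

theorem foldl_mul_assoc (hassoc : ∀ x y z : V, a (a x y) z = a x (a y z)) (ys : List V)
    (u y : V) : a u (ys.foldl (fun p q => a p q) y) = ys.foldl (fun p q => a p q) (a u y) := by
  induction ys generalizing y with
  | nil => rfl
  | cons z zs ih => rw [List.foldl_cons, ih, List.foldl_cons, hassoc]

theorem listProd_append (hassoc : ∀ x y z : V, a (a x y) z = a x (a y z)) {L₁ L₂ : List V}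
    (h₁ : L₁ ≠ []) (h₂ : L₂ ≠ []) :
    listProd a (L₁ ++ L₂) = a (listProd a L₁) (listProd a L₂) := by
  obtain ⟨x, xs, rfl⟩ := List.exists_cons_of_ne_nil h₁
  obtain ⟨y, ys, rfl⟩ := List.exists_cons_of_ne_nil h₂
  rw [List.cons_append, listProd, listProd, listProd, List.foldl_append, List.foldl_cons,
    foldl_mul_assoc a hassoc]

end Product

def deconcatFst {n : ℕ} (X : Fin (n + 1) → V) (s : Fin n) : Fin ((s : ℕ) + 1) → V :=
  fun k => X ⟨k, by omega⟩

def deconcatSnd {n : ℕ} (X : Fin (n + 1) → V) (s : Fin n) : Fin ((n - 1 - (s : ℕ)) + 1) → V :=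
  fun k => X ⟨(s : ℕ) + 1 + k, by omega⟩

theorem prodF_deconcat {a : V →ₗ[ℂ] V →ₗ[ℂ] V} (hassoc : ∀ x y z : V, a (a x y) z = a x (a y z))
    {n : ℕ} (X : Fin (n + 1) → V) (s : Fin n) :
    a (prodF a (deconcatFst X s)) (prodF a (deconcatSnd X s)) = prodF a X := by
  rw [prodF, prodF, prodF, ← listProd_append a hassoc (by simp) (by simp)]
  congr 1
  refine List.ext_getElem (by simp only [List.length_append, List.length_ofFn]; omega)
    fun i h₁ h₂ => ?_
  simp only [List.getElem_append, List.getElem_ofFn, List.length_ofFn]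
  split_ifs
  · rfl
  · exact congrArg X (Fin.ext (by dsimp only; omega))

theorem pr_inclT_zero (t : Tpow V 1) :
    pr V (inclT V 0 t) = PiTensorProduct.subsingletonEquiv (0 : Fin 1) t := by
  simp [pr, inclT, DirectSum.toModule_lof]

theorem pr_inclT_zero_tprod (X : Fin 1 → V) :
    pr V (inclT V 0 (PiTensorProduct.tprod ℂ X)) = X 0 := by
  rw [pr_inclT_zero, PiTensorProduct.subsingletonEquiv_apply_tprod]

theorem pr_inclT_of_ne_zero {n : ℕ} (hn : n ≠ 0) (t : Tpow V (n + 1)) :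
    pr V (inclT V n t) = 0 := by
  obtain ⟨m, rfl⟩ := Nat.exists_eq_succ_of_ne_zero hn
  simp [pr, inclT, DirectSum.toModule_lof]

theorem Δ_inclT_tprod {n : ℕ} (X : Fin (n + 1) → V) :
    Δ V (inclT V n (PiTensorProduct.tprod ℂ X)) =
      ∑ s : Fin n, inclT V s (PiTensorProduct.tprod ℂ (deconcatFst X s)) ⊗ₜ[ℂ]
        inclT V (n - 1 - s) (PiTensorProduct.tprod ℂ (deconcatSnd X s)) := by
  rw [Δ, inclT, DirectSum.toModule_lof, LinearMap.sum_apply]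
  refine Finset.sum_congr rfl fun s _ => ?_
  simp only [LinearMap.comp_apply, castT, splitT, LinearEquiv.coe_coe,
    LinearEquiv.trans_apply, PiTensorProduct.reindex_tprod,
    PiTensorProduct.tmulEquiv_symm_apply, TensorProduct.map_tmul]
  rfl

theorem expT_inclT (A : TCo V →ₗ[ℂ] TCo V) (n : ℕ) (t : Tpow V (n + 1)) :
    expT A (inclT V n t) =
      ∑ k ∈ Finset.range (n + 1), ((k.factorial : ℂ)⁻¹) • (A ^ k) (inclT V n t) := by
  rw [expT, inclT, DirectSum.toModule_lof, LinearMap.comp_apply, LinearMap.sum_apply]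
  rfl

theorem IsCoalgLift.pr_comp {f : V →ₗ[ℂ] W} {F : TCo V →ₗ[ℂ] TCo W} (hF : IsCoalgLift f F) :
    pr W ∘ₗ F = f ∘ₗ pr V := by
  refine DirectSum.linearMap_ext ℂ fun n => LinearMap.ext fun t => ?_
  change pr W (F (inclT V n t)) = f (pr V (inclT V n t))
  rcases eq_or_ne n 0 with rfl | hn
  · simpa [inclV, pr_inclT_zero] using
      LinearMap.congr_fun hF.2.1 (PiTensorProduct.subsingletonEquiv (0 : Fin 1) t)
  · rw [pr_inclT_of_ne_zero hn, map_zero]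
    exact LinearMap.congr_fun (hF.2.2 n hn) t

section Coderivation

variable {a : V →ₗ[ℂ] V →ₗ[ℂ] V} {A : TCo V →ₗ[ℂ] TCo V}

theorem IsCoder.Δ_comp_pow (hA : IsCoder A) (k : ℕ) :
    Δ V ∘ₗ (A ^ k) =
      ∑ i ∈ Finset.range (k + 1), k.choose i • TensorProduct.map (A ^ i) (A ^ (k - i)) ∘ₗ Δ V :=
  LinearMap.comp_pow_eq_sum_choose_map _ _ _ _ hA k

theorem IsCoderLift.pr_comp (hA : IsCoderLift a A) :
    pr V ∘ₗ A = TensorProduct.lift a ∘ₗ TensorProduct.map (pr V) (pr V) ∘ₗ Δ V := by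
  refine DirectSum.linearMap_ext ℂ fun n => PiTensorProduct.ext <| MultilinearMap.ext fun X => ?_
  change pr V (A (inclT V n _)) = TensorProduct.lift a (TensorProduct.map (pr V) (pr V)
    (Δ V (inclT V n (PiTensorProduct.tprod ℂ X))))
  rw [Δ_inclT_tprod]
  rcases eq_or_ne n 1 with rfl | hn
  · rw [Fin.sum_univ_one, TensorProduct.map_tmul, TensorProduct.lift.tmul, hA.2.1]
    change a (X 0) (X 1) = a (pr V (inclT V 0 (PiTensorProduct.tprod ℂ (deconcatFst X 0))))
      (pr V (inclT V 0 (PiTensorProduct.tprod ℂ (deconcatSnd X 0))))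
    rw [pr_inclT_zero_tprod, pr_inclT_zero_tprod]
    rfl
  · have hA₀ : pr V (A (inclT V n (PiTensorProduct.tprod ℂ X))) = 0 :=
      LinearMap.congr_fun (hA.2.2 n hn) _
    rw [hA₀, map_sum, map_sum]
    refine (Finset.sum_eq_zero fun s _ => ?_).symm
    rw [TensorProduct.map_tmul]
    rcases eq_or_ne (s : ℕ) 0 with hs | hs
    · rw [pr_inclT_of_ne_zero (n := n - 1 - s) (by omega), TensorProduct.tmul_zero, map_zero]
    · rw [pr_inclT_of_ne_zero hs, TensorProduct.zero_tmul, map_zero]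

theorem IsCoderLift.pr_pow_succ_apply (hA : IsCoderLift a A) (m : ℕ) (x : TCo V) :
    pr V ((A ^ (m + 1)) x) = ∑ i ∈ Finset.range (m + 1), m.choose i •
      TensorProduct.lift a
        (TensorProduct.map (pr V ∘ₗ (A ^ i)) (pr V ∘ₗ (A ^ (m - i))) (Δ V x)) := by
  rw [pow_succ', Module.End.mul_apply, ← LinearMap.comp_apply (pr V), hA.pr_comp,
    LinearMap.comp_apply, LinearMap.comp_apply, ← LinearMap.comp_apply (Δ V),
    hA.1.Δ_comp_pow]
  simp only [LinearMap.sum_apply, LinearMap.smul_apply, map_sum, map_nsmul, LinearMap.comp_apply,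
    ← LinearMap.comp_apply (TensorProduct.map (pr V) (pr V)), ← TensorProduct.map_comp]

open Nat in
theorem IsCoderLift.pr_pow_inclT_tprod (hassoc : ∀ x y z : V, a (a x y) z = a x (a y z))
    (hA : IsCoderLift a A) (n k : ℕ) (X : Fin (n + 1) → V) :
    pr V ((A ^ k) (inclT V n (PiTensorProduct.tprod ℂ X))) =
      if k = n then n ! • prodF a X else 0 := by
  induction n using Nat.strong_induction_on generalizing k with
  | _ n ih =>
  rcases k with _ | m
  · rw [pow_zero, Module.End.one_apply]
    rcases eq_or_ne n 0 with rfl | hn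
    · simp [pr_inclT_zero_tprod, prodF, listProd]
    · rw [pr_inclT_of_ne_zero hn, if_neg (Ne.symm hn)]
  · have ihFst (s : Fin n) (i : ℕ) := ih s s.isLt i (deconcatFst X s)
    have ihSnd (s : Fin n) (i : ℕ) := ih (n - 1 - s) (by omega) i (deconcatSnd X s)
    simp only [hA.pr_pow_succ_apply, Δ_inclT_tprod, map_sum, TensorProduct.map_tmul,
      LinearMap.comp_apply, TensorProduct.lift.tmul, ihFst, ihSnd, LinearMap.map_ite_zero₂,
      map_nsmul, LinearMap.smul_apply, prodF_deconcat hassoc]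
    exact sum_choose_smul_deconcat (prodF a X) m n

theorem IsCoderLift.pr_expT_inclT_tprod (hassoc : ∀ x y z : V, a (a x y) z = a x (a y z))
    (hA : IsCoderLift a A) {n : ℕ} (X : Fin (n + 1) → V) :
    pr V (expT A (inclT V n (PiTensorProduct.tprod ℂ X))) = prodF a X := by
  rw [expT_inclT, map_sum, Finset.sum_eq_single_of_mem n (Finset.self_mem_range_succ n)
    fun k _ hk => by rw [map_smul, hA.pr_pow_inclT_tprod hassoc, if_neg hk, smul_zero],
    map_smul, hA.pr_pow_inclT_tprod hassoc, if_pos rfl, ← Nat.cast_smul_eq_nsmul ℂ, smul_smul,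
    inv_mul_cancel₀ (Nat.cast_ne_zero.2 n.factorial_ne_zero), one_smul]

end Coderivation

/-- For a probability space `(V, E, a)`, the composite `π_ℂ ∘ Ê ∘ exp(A)` on `V^{⊗n}`
sends `X₁ ⊗ ⋯ ⊗ Xₙ` to the joint moment `E(X₁X₂⋯Xₙ)`. -/
theorem moments_from_exp_and_lift
    {V : Type} [AddCommGroup V] [Module ℂ V]
    (E : V →ₗ[ℂ] ℂ) (a : V →ₗ[ℂ] V →ₗ[ℂ] V)
    (hassoc : ∀ x y z : V, a (a x y) z = a x (a y z))
    (Ehat : TCo V →ₗ[ℂ] TCo ℂ) (hE : IsCoalgLift E Ehat)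
    (A : TCo V →ₗ[ℂ] TCo V) (hA : IsCoderLift a A)
    (n : ℕ) (X : Fin (n + 1) → V) :
    pr ℂ (Ehat (expT A (inclT V n (PiTensorProduct.tprod ℂ X)))) =
      E (prodF a X) := by
  rw [← LinearMap.comp_apply (pr ℂ), hE.pr_comp, LinearMap.comp_apply,
    hA.pr_expT_inclT_tprod hassoc]
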